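/- The map C_{λ,λ+2}(X d/dx)(f) = X''' f + 2 X'' f' is a 1-cocycle on vect(1) with values in D_{λ,λ+2}, i.e. for all polynomials X, Y, f: C_{λ,λ+2}([X,Y])(f) = L^{λ+2}_X(C_{λ,λ+2}(Y)(f)) − L^{λ+2}_Y(C_{λ,λ+2}(X)(f)) − C_{λ,λ+2}(Y)(L^λ_X f) + C_{λ,λ+2}(X)(L^λ_Y f). -/
import Mathlib


open Polynomial

/-- The action `L^λ_X(f) = X f' + λ X' f` of `X d/dx` on λ-densities. -/
noncomputable def Lact (lam : ℝ) (Xp f : Polynomial ℝ) : Polynomial ℝ :=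
  Xp * derivative f + lam • (derivative Xp * f)

/-- `C_{λ,λ+2}(X d/dx)(f) = X⁽³⁾ f + 2 X'' f'`. -/
noncomputable def C2 (Xp f : Polynomial ℝ) : Polynomial ℝ :=
  derivative^[3] Xp * f + (2 : ℝ) • (derivative^[2] Xp * derivative f)

/-- `C_{λ,λ+2}` is a 1-cocycle on `vect(1)` with values in `D_{λ,λ+2}`:
`C([X,Y])(f) = L^{λ+2}_X(C(Y)(f)) − L^{λ+2}_Y(C(X)(f)) − C(Y)(L^λ_X f) + C(X)(L^λ_Y f)`. -/
theorem C2_cocycle (lam : ℝ) (Xp Yp f : Polynomial ℝ) :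
    C2 (Xp * derivative Yp - derivative Xp * Yp) f
      = Lact (lam + 2) Xp (C2 Yp f) - Lact (lam + 2) Yp (C2 Xp f)
        - C2 Yp (Lact lam Xp f) + C2 Xp (Lact lam Yp f) := by
  simp only [C2, Lact, Function.iterate_succ, Function.iterate_zero, Function.comp_apply, id_eq,
    derivative_add, derivative_sub, derivative_mul, derivative_smul, smul_add, smul_sub,
    smul_mul_assoc, mul_smul_comm, smul_smul, Polynomial.smul_eq_C_mul, map_add, derivative_C, Polynomial.C_eq_natCast, map_ofNat, Polynomial.derivative_ofNat, Polynomial.derivative_natCast]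
  ring
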